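/- For every horizon T ≥ 1 and every state s = (n_1,…,n_N), if L̂ ∈ {n_1,…,|s|} satisfies F(s,L̂) ≤ F(s,L) for every L ∈ {n_1,…,|s|}, then J^A_T(s,L̂) ≤ J^A_T(s,L) for every L ∈ {0,…,|s|}; that is, any minimizer of F(s,·) over its domain is an optimal offloading decision for s. -/
import Mathlib


open Finset

/-- System parameters: offloading cost, penalty cost, AMA probability,
local-processing probability, and arrival probabilities. -/
structure Params where
  Co : ℝ
  Cp : ℝ
  pa : ℝ
  mu : ℝ
  p : ℕ → ℝ

variable {N : ℕ}

/-- Partial sum `S_j(s) = ∑_{i=1}^j n_i` (components of `s` are 0-indexed). -/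
def S (s : Fin N → ℕ) (j : ℕ) : ℕ :=
  ∑ i ∈ Finset.univ.filter fun i : Fin N => (i : ℕ) < j, s i

/-- Total number of tasks `|s|`. -/
def tot (s : Fin N → ℕ) : ℕ := S s N

/-- The state obtained by offloading the `L` most imminent tasks of `s`:
`(s̄_L)_i = max(S_i(s) − L, 0) − max(S_{i−1}(s) − L, 0)` (truncated ℕ-subtraction). -/
def offload (s : Fin N → ℕ) (L : ℕ) : Fin N → ℕ :=
  fun i => (S s ((i : ℕ) + 1) - L) - (S s (i : ℕ) - L)

/-- Deadline shifting: `shift(s) = (n_2, …, n_N, 0)`. -/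
def shift (s : Fin N → ℕ) : Fin N → ℕ :=
  fun i => if h : (i : ℕ) + 1 < N then s ⟨(i : ℕ) + 1, h⟩ else 0

/-- Arrival vector `a_k`: the `k`-th standard unit vector for `1 ≤ k ≤ N`, zero for `k = 0`. -/
def avec (k : ℕ) : Fin N → ℕ := fun i => if (i : ℕ) + 1 = k then 1 else 0

/-- Local processing: remove one task of smallest deadline (identity on the zero state). -/
def proc (s : Fin N → ℕ) : Fin N → ℕ :=
  fun i => if s i ≠ 0 ∧ ∀ j : Fin N, j < i → s j = 0 then s i - 1 else s i

/-- `s''_{Lk} = shift(s̄_L) + a_k`. -/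
def sdd (s : Fin N → ℕ) (L k : ℕ) : Fin N → ℕ :=
  fun i => shift (offload s L) i + avec k i

/-- `s'_{Lk} = proc(s''_{Lk})`. -/
def sd (s : Fin N → ℕ) (L k : ℕ) : Fin N → ℕ := proc (sdd s L k)

/-- Instantaneous cost with the AMA: `𝒞^A(s,L) = C_o·L + C_p·max(n_1 − L, 0)`. -/
def costA (P : Params) (s : Fin N → ℕ) (L : ℕ) : ℝ :=
  P.Co * L + P.Cp * ((S s 1 - L : ℕ) : ℝ)

/-- Instantaneous cost without the AMA: `𝒞^Ā(s) = C_p·n_1`. -/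
def costNA (P : Params) (s : Fin N → ℕ) : ℝ := P.Cp * (S s 1 : ℕ)

/-- Expected instantaneous cost `𝒞(s,L)`. -/
def cost (P : Params) (s : Fin N → ℕ) (L : ℕ) : ℝ :=
  P.pa * costA P s L + (1 - P.pa) * costNA P s

/-- The dynamic-programming minimization, given the future-cost function `G`. -/
noncomputable def JofG (P : Params) (G : (Fin N → ℕ) → ℕ → ℝ) (s : Fin N → ℕ) : ℝ :=
  (Finset.range (tot s + 1)).inf' (Finset.nonempty_range_iff.mpr (Nat.succ_ne_zero _))
    fun L => cost P s L + P.pa * G s L + (1 - P.pa) * G s 0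

/-- `G^A_T(s,L)`, defined by recursion on the horizon `T`. -/
noncomputable def GA (P : Params) : ℕ → (Fin N → ℕ) → ℕ → ℝ
  | 0, _, _ => 0
  | T + 1, s, L =>
      P.mu * ∑ k ∈ Finset.range (N + 1), P.p k * JofG P (GA P T) (sd s L k)
        + (1 - P.mu) * ∑ k ∈ Finset.range (N + 1), P.p k * JofG P (GA P T) (sdd s L k)

/-- `J_T(s)` for horizon `T ≥ 1`. -/
noncomputable def J (P : Params) (T : ℕ) (s : Fin N → ℕ) : ℝ := JofG P (GA P (T - 1)) s

/-- `J^A_T(s,L) = 𝒞^A(s,L) + G^A_{T−1}(s,L)`. -/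
noncomputable def JA (P : Params) (T : ℕ) (s : Fin N → ℕ) (L : ℕ) : ℝ :=
  costA P s L + GA P (T - 1) s L

/-- `J^A_T(s) = min_{0 ≤ L ≤ |s|} J^A_T(s,L)`. -/
noncomputable def JAmin (P : Params) (T : ℕ) (s : Fin N → ℕ) : ℝ :=
  (Finset.range (tot s + 1)).inf' (Finset.nonempty_range_iff.mpr (Nat.succ_ne_zero _))
    (JA P T s)

/-- `J^Ā_T(s) = 𝒞^Ā(s) + G^A_{T−1}(s,0)`. -/
noncomputable def JNA (P : Params) (T : ℕ) (s : Fin N → ℕ) : ℝ :=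
  costNA P s + GA P (T - 1) s 0

/-- The optimal offloading decision: the smallest minimizer of `L ↦ J^A_T(s,L)`
over `{0,…,|s|}`. -/
noncomputable def Lstar (P : Params) (T : ℕ) (s : Fin N → ℕ) : ℕ :=
  sInf {L | L ≤ tot s ∧ ∀ L' ≤ tot s, JA P T s L ≤ JA P T s L'}

/-- The smallest deadline `d(s)` carried by a task of `s` (1-indexed). -/
noncomputable def dmin (s : Fin N → ℕ) : ℕ := sInf {j | 0 < S s j}

/-- `sa` is adjacent to `s`. -/
def Adjacent (s sa : Fin N → ℕ) : Prop :=
  (s ≠ 0 ∧ ∃ j, 1 ≤ j ∧ j ≤ dmin s ∧ sa = s + avec j) ∨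
    (s = 0 ∧ ∃ j, 1 ≤ j ∧ j ≤ N ∧ sa = avec j)

/-- `L_g`: the number of excessive tasks, `max_{1 ≤ j ≤ M} max(S_j(s) − (j−1), 0)`. -/
def Lg (s : Fin N → ℕ) (M : ℕ) : ℕ := (Finset.Icc 1 M).sup fun j => S s j - (j - 1)

/-- `Γ_j = ∑_{i=1}^j γ_i` for the parameters `γ` of Definition 2
(`γ_1 = 0`, `γ_j = min(n_j, j−1−∑_{i<j} γ_i)` for `2 ≤ j ≤ M`, `γ_j = 0` for `j > M`). -/
def Gam (s : Fin N → ℕ) (M : ℕ) : ℕ → ℕ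
  | 0 => 0
  | j + 1 =>
      if 2 ≤ j + 1 ∧ j + 1 ≤ M then
        Gam s M j + min (S s (j + 1) - S s j) (j - Gam s M j)
      else Gam s M j

/-- The lean state of `s`: `n^ℓ_i = max(γ_i, n^r_i)` where `s^r = s̄_{L_g}`. -/
def leanState (s : Fin N → ℕ) (M : ℕ) : Fin N → ℕ :=
  fun i => max (Gam s M ((i : ℕ) + 1) - Gam s M (i : ℕ)) (offload s (Lg s M) i)

/-- `F(s,L) = J^Ā_T(s̄_L) + L·C_o`. -/
noncomputable def F (P : Params) (T : ℕ) (s : Fin N → ℕ) (L : ℕ) : ℝ :=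
  JNA P T (offload s L) + L * P.Co

lemma S_zero' (u : Fin N → ℕ) : S u 0 = 0 := by
  simp [S]

lemma S_mono' (u : Fin N → ℕ) {j j' : ℕ} (h : j ≤ j') : S u j ≤ S u j' := by
  apply Finset.sum_le_sum_of_subset
  intro x hx
  simp only [Finset.mem_filter, Finset.mem_univ, true_and] at hx ⊢
  omega

lemma S_succ' (u : Fin N → ℕ) (i : Fin N) : S u ((i : ℕ) + 1) = S u (i : ℕ) + u i := by
  unfold S
  rw [show (Finset.univ.filter fun x : Fin N => (x : ℕ) < (i : ℕ) + 1)
      = insert i (Finset.univ.filter fun x : Fin N => (x : ℕ) < (i : ℕ)) by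
    ext x; simp [Fin.ext_iff]; omega]
  rw [Finset.sum_insert (by simp)]
  omega

lemma offload_zero (u : Fin N → ℕ) : offload u 0 = u := by
  funext i
  have := S_succ' u i
  simp only [offload]
  omega

lemma shift_offload_eq (s : Fin N → ℕ) {L L' : ℕ} (hL : L ≤ S s 1) (hL' : L' ≤ S s 1) :
    shift (offload s L) = shift (offload s L') := by
  funext i
  unfold shift
  split
  · next h =>
    show offload s L ⟨(i : ℕ) + 1, h⟩ = offload s L' ⟨(i : ℕ) + 1, h⟩
    have h1 : S s 1 ≤ S s ((i : ℕ) + 1) := S_mono' s (by omega)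
    have h2 : S s ((i : ℕ) + 1) ≤ S s ((i : ℕ) + 1 + 1) := S_mono' s (by omega)
    simp only [offload]
    omega
  · rfl

lemma GA_congr (P : Params) (t : ℕ) {s s' : Fin N → ℕ} {L L' : ℕ}
    (h : shift (offload s L) = shift (offload s' L')) :
    GA P t s L = GA P t s' L' := by
  cases t with
  | zero => rfl
  | succ t =>
    have hdd : ∀ k, sdd s L k = sdd s' L' k := fun k => funext fun i => by
      simp [sdd, h]
    simp only [GA, sd, hdd]

lemma S_one' (hN : 0 < N) (u : Fin N → ℕ) : S u 1 = u ⟨0, hN⟩ := by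
  unfold S
  rw [show (Finset.univ.filter fun x : Fin N => (x : ℕ) < 1) = {(⟨0, hN⟩ : Fin N)} by
    ext x
    simp only [Finset.mem_filter, Finset.mem_univ, true_and, Finset.mem_singleton, Fin.ext_iff]
    omega]
  simp

lemma JA_eq_F (hN : 0 < N) (P : Params) (T : ℕ) (s : Fin N → ℕ) (L : ℕ) :
    JA P T s L = F P T s L := by
  unfold JA F JNA costA costNA
  have hG : GA P (T - 1) s L = GA P (T - 1) (offload s L) 0 :=
    GA_congr P _ (by rw [offload_zero])
  have h1 : S (offload s L) 1 = S s 1 - L := by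
    rw [S_one' hN]
    show (S s 1 - L) - (S s 0 - L) = S s 1 - L
    rw [S_zero']
    omega
  rw [hG, h1]
  ring

/-- any minimizer of F(s,·) over {n_1,…,|s|} is an optimal
offloading decision for s, i.e. it minimizes J^A_T(s,·) over {0,…,|s|}. -/
theorem F_minimizer_is_optimal {N : ℕ} (hN : 1 ≤ N)
    (P : Params) (hCo : 0 < P.Co) (hCoCp : P.Co < P.Cp)
    (hpa0 : 0 ≤ P.pa) (hpa1 : P.pa ≤ 1) (hmu0 : 0 ≤ P.mu) (hmu1 : P.mu ≤ 1)
    (hp : ∀ k ≤ N, 0 ≤ P.p k) (hpsum : ∑ k ∈ Finset.range (N + 1), P.p k = 1)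
    (T : ℕ) (hT : 1 ≤ T) (s : Fin N → ℕ) (Lhat : ℕ)
    (hLhat1 : S s 1 ≤ Lhat) (hLhat2 : Lhat ≤ tot s)
    (hmin : ∀ L, S s 1 ≤ L → L ≤ tot s → F P T s Lhat ≤ F P T s L) :
    ∀ L ≤ tot s, JA P T s Lhat ≤ JA P T s L := by
  have hN0 : 0 < N := hN
  intro L hL
  by_cases hc : S s 1 ≤ L
  · rw [JA_eq_F hN0, JA_eq_F hN0]
    exact hmin L hc hL
  · push_neg at hc
    have hn1tot : S s 1 ≤ tot s := S_mono' s hN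
    have key : JA P T s (S s 1) ≤ JA P T s L := by
      unfold JA costA
      have hG : GA P (T - 1) s L = GA P (T - 1) s (S s 1) :=
        GA_congr P _ (shift_offload_eq s (le_of_lt hc) le_rfl)
      rw [hG]
      have hcast : ((S s 1 - L : ℕ) : ℝ) = (S s 1 : ℝ) - L :=
        Nat.cast_sub (le_of_lt hc)
      have hcastL : (L : ℝ) ≤ (S s 1 : ℝ) := Nat.cast_le.mpr (le_of_lt hc)
      rw [Nat.sub_self, hcast]
      simp only [Nat.cast_zero, mul_zero, add_zero]
      nlinarith [mul_nonneg (le_of_lt (sub_pos.mpr hCoCp)) (sub_nonneg.mpr hcastL)]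
    calc JA P T s Lhat = F P T s Lhat := JA_eq_F hN0 P T s Lhat
      _ ≤ F P T s (S s 1) := hmin _ le_rfl hn1tot
      _ = JA P T s (S s 1) := (JA_eq_F hN0 P T s (S s 1)).symm
      _ ≤ JA P T s L := key
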